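/- arXiv:1606.07531 — 2 statements merged into one kernel-verified Lean document; each statement's English description precedes it below -/
import Mathlib

section
/- Let D ∈ ℝ^{n×N} be a tight frame (DD* = I_n), and let A ∈ ℝ^{m×n} satisfy the D-RIP₁ of order t = 25s with constant δ = 1/5, i.e. (1−δ)‖g‖₂ ≤ ‖Ag‖₁ ≤ (1+δ)‖g‖₂ for all g = Dx with x s-sparse of sparsity at most t. Then for every effectively s-analysis-sparse f ∈ ℝ^n (‖D*f‖₁ ≤ √s‖D*f‖₂), one has ‖Af‖₁ ≥ (2/(5√s)) ‖D*f‖₁. -/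
/-!
Write `x = Dᵀ f`, so that `f = D x`. Sort the entries of `x` by decreasing magnitude and cut them
into consecutive blocks `T₀, T₁, …` of size `t = 25 s`. Every entry of `T_{k+1}` is at most the
average of `|x|` over `T_k`, so `∑_{k ≥ 1} ‖x_{T_k}‖₂ ≤ ‖x‖₁ / √t`. Applying the D-RIP₁ to each
block, together with `‖D y‖₂ ≤ ‖y‖₂` and `‖Dᵀ f‖₂ = ‖f‖₂`, gives
`‖A f‖₁ ≥ (1 - δ) ‖x‖₂ - 2 ∑_{k ≥ 1} ‖x_{T_k}‖₂ ≥ (4/5) ‖x‖₂ - (2/5) ‖x‖₁ / √s`,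
and effective sparsity `‖x‖₁ ≤ √s ‖x‖₂` turns this into the claim.
-/

noncomputable def norm2 {ι : Type*} [Fintype ι] (x : ι → ℝ) : ℝ :=
  Real.sqrt (∑ i, x i ^ 2)

noncomputable def norm1 {ι : Type*} [Fintype ι] (x : ι → ℝ) : ℝ := ∑ i, |x i|

open Finset Matrix

section Norms

variable {ι κ : Type*} [Fintype ι]

lemma norm1_nonneg (x : ι → ℝ) : 0 ≤ norm1 x :=
  sum_nonneg fun _ _ => abs_nonneg _

lemma norm1_sub_le (x y : ι → ℝ) : norm1 (x - y) ≤ norm1 x + norm1 y := by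
  rw [norm1, norm1, norm1, ← sum_add_distrib]
  exact sum_le_sum fun i _ => abs_sub _ _

lemma norm1_sum_le (s : Finset κ) (x : κ → ι → ℝ) :
    norm1 (∑ k ∈ s, x k) ≤ ∑ k ∈ s, norm1 (x k) := by
  simp only [norm1, Finset.sum_apply]
  rw [sum_comm]
  exact sum_le_sum fun i _ => abs_sum_le_sum_abs _ _

lemma norm2_nonneg (x : ι → ℝ) : 0 ≤ norm2 x := Real.sqrt_nonneg _

lemma norm2_eq_norm_toLp (x : ι → ℝ) : norm2 x = ‖WithLp.toLp 2 x‖ := by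
  simp [norm2, EuclideanSpace.norm_eq]

lemma norm2_eq_sqrt_dotProduct (x : ι → ℝ) : norm2 x = √(x ⬝ᵥ x) := by
  simp [norm2, dotProduct, sq]

lemma sq_norm2 (x : ι → ℝ) : norm2 x ^ 2 = x ⬝ᵥ x := by
  have hx : 0 ≤ x ⬝ᵥ x := sum_nonneg fun i _ => mul_self_nonneg (x i)
  rw [norm2_eq_sqrt_dotProduct, Real.sq_sqrt hx]

lemma norm2_add_le (x y : ι → ℝ) : norm2 (x + y) ≤ norm2 x + norm2 y := by
  simpa only [norm2_eq_norm_toLp, WithLp.toLp_add] using norm_add_le _ _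

lemma norm2_sum_le (s : Finset κ) (x : κ → ι → ℝ) :
    norm2 (∑ k ∈ s, x k) ≤ ∑ k ∈ s, norm2 (x k) := by
  simpa only [norm2_eq_norm_toLp, WithLp.toLp_sum] using norm_sum_le _ _

lemma dotProduct_le_norm2_mul_norm2 (x y : ι → ℝ) : x ⬝ᵥ y ≤ norm2 x * norm2 y := by
  simpa [norm2_eq_norm_toLp, EuclideanSpace.inner_eq_star_dotProduct, dotProduct_comm]
    using real_inner_le_norm (WithLp.toLp 2 x) (WithLp.toLp 2 y)

lemma norm2_le_of_card_support_le {v : ι → ℝ} {t : ℕ} {M : ℝ} (ht : 0 < t) (hM : 0 ≤ M)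
    (hcard : #{i | v i ≠ 0} ≤ t) (hv : ∀ i, t * |v i| ≤ M) : norm2 v ≤ M / √t := by
  have htR : (0 : ℝ) < t := by exact_mod_cast ht
  have hsq : ∀ i, v i ^ 2 ≤ (M / t) ^ 2 := fun i => by
    rw [← sq_abs]
    exact pow_le_pow_left₀ (abs_nonneg _) ((le_div_iff₀' htR).2 (hv i)) 2
  have hsum : ∑ i, v i ^ 2 ≤ M ^ 2 / t := calc
    ∑ i, v i ^ 2 = ∑ i with v i ≠ 0, v i ^ 2 := by
      rw [sum_filter_of_ne fun i _ hi => by simpa using hi]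
    _ ≤ #{i | v i ≠ 0} * (M / t) ^ 2 := by
      simpa using sum_le_sum fun i (_ : i ∈ ({i | v i ≠ 0} : Finset ι)) => hsq i
    _ ≤ t * (M / t) ^ 2 := by gcongr
    _ = M ^ 2 / t := by field_simp
  calc norm2 v ≤ √(M ^ 2 / t) := Real.sqrt_le_sqrt hsum
    _ = M / √t := by rw [Real.sqrt_div (sq_nonneg M), Real.sqrt_sq hM]

end Norms

section TightFrame

variable {n N : ℕ} {D : Matrix (Fin n) (Fin N) ℝ}

lemma norm2_transpose_mulVec (hD : D * Dᵀ = 1) (z : Fin n → ℝ) : norm2 (Dᵀ *ᵥ z) = norm2 z := by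
  rw [norm2_eq_sqrt_dotProduct, norm2_eq_sqrt_dotProduct, dotProduct_mulVec, vecMul_transpose,
    mulVec_mulVec, hD, one_mulVec, dotProduct_comm]

lemma norm2_mulVec_le (hD : D * Dᵀ = 1) (y : Fin N → ℝ) : norm2 (D *ᵥ y) ≤ norm2 y := by
  have h : norm2 (D *ᵥ y) ^ 2 ≤ norm2 (D *ᵥ y) * norm2 y := calc
    norm2 (D *ᵥ y) ^ 2 = (Dᵀ *ᵥ D *ᵥ y) ⬝ᵥ y := by
      rw [sq_norm2, dotProduct_mulVec, ← mulVec_transpose]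
    _ ≤ norm2 (D *ᵥ y) * norm2 y :=
      (dotProduct_le_norm2_mul_norm2 _ _).trans_eq (by rw [norm2_transpose_mulVec hD])
  nlinarith [norm2_nonneg (D *ᵥ y), norm2_nonneg y]

end TightFrame

section Blocks

variable {N : ℕ} (x : Fin N → ℝ) (σ : Equiv.Perm (Fin N)) (t : ℕ)

/-- The block `T_k`: the indices in positions `k t, …, k t + t - 1` of the ordering `σ`. -/
def blockSet (k : ℕ) : Finset (Fin N) := {i | (σ.symm i : ℕ) / t = k}

def block (k : ℕ) : Fin N → ℝ := fun i => if i ∈ blockSet σ t k then x i else 0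

variable {x σ t}

lemma card_blockSet_le (ht : 0 < t) (k : ℕ) : #(blockSet σ t k) ≤ t := calc
  #(blockSet σ t k) ≤ #(Ico (k * t) (k * t + t)) := by
    refine card_le_card_of_injOn (fun i => (σ.symm i : ℕ)) (fun i hi => ?_) ?_
    · have := (Nat.div_eq_iff ht).1 (mem_filter.1 hi).2
      simp only [coe_Ico, Set.mem_Ico]
      omega
    · exact fun i _ j _ hij => σ.symm.injective (Fin.ext hij)
  _ = t := by simp

lemma le_card_blockSet (ht : 0 < t) {k : ℕ} (hk : (k + 1) * t ≤ N) : t ≤ #(blockSet σ t k) := calc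
  t = #(Ico (k * t) (k * t + t)) := by simp
  _ ≤ #(blockSet σ t k) := by
    refine card_le_card_of_surjOn (fun i => (σ.symm i : ℕ)) fun a ha => ?_
    simp only [coe_Ico, Set.mem_Ico] at ha
    have haN : a < N := by rw [add_one_mul] at hk; omega
    refine ⟨σ ⟨a, haN⟩, ?_, by simp⟩
    simp only [blockSet, coe_filter, mem_univ, true_and, Set.mem_ofPred_eq,
      Equiv.symm_apply_apply, Nat.div_eq_iff ht]
    omega

lemma abs_le_of_mem_blockSet_succ (hσ : Antitone fun a => |x (σ a)|) {k : ℕ} {i j : Fin N}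
    (hi : i ∈ blockSet σ t (k + 1)) (hj : j ∈ blockSet σ t k) : |x i| ≤ |x j| := by
  simp only [blockSet, mem_filter, mem_univ, true_and] at hi hj
  have hji : σ.symm j < σ.symm i := Fin.lt_def.2 (Nat.lt_of_div_lt_div (c := t) (by omega))
  simpa using hσ hji.le

lemma norm1_block (k : ℕ) : norm1 (block x σ t k) = ∑ i ∈ blockSet σ t k, |x i| := by
  simp [norm1, block, apply_ite, sum_ite_mem]

lemma card_support_block_le (ht : 0 < t) (k : ℕ) : #{i | block x σ t k i ≠ 0} ≤ t := by
  refine (card_le_card fun i hi => ?_).trans (card_blockSet_le (σ := σ) ht k)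
  by_contra h
  simp [block, h] at hi

lemma sum_block : ∑ k ∈ range (N + 1), block x σ t k = x := by
  ext i
  have : (σ.symm i : ℕ) / t < N + 1 := by
    have := Nat.div_le_self (σ.symm i : ℕ) t
    omega
  simp [Finset.sum_apply, block, blockSet, this]

lemma sum_norm1_block : ∑ k ∈ range N, norm1 (block x σ t k) = norm1 x := by
  simp only [norm1_block, blockSet]
  refine sum_fiberwise_of_maps_to (fun i _ => ?_) _
  simpa using (Nat.div_le_self _ _).trans_lt (σ.symm i).isLt

lemma norm2_block_succ_le (ht : 0 < t) (hσ : Antitone fun a => |x (σ a)|) (k : ℕ) :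
    norm2 (block x σ t (k + 1)) ≤ norm1 (block x σ t k) / √t := by
  refine norm2_le_of_card_support_le ht (norm1_nonneg _) (card_support_block_le ht _) fun i => ?_
  by_cases hi : i ∈ blockSet σ t (k + 1)
  · have hN : (k + 1) * t ≤ N := by
      calc (k + 1) * t = (σ.symm i : ℕ) / t * t := by rw [(mem_filter.1 hi).2]
        _ ≤ N := (Nat.div_mul_le_self _ _).trans (σ.symm i).isLt.le
    calc t * |block x σ t (k + 1) i| ≤ #(blockSet σ t k) * |x i| := by
          simp only [block, hi, if_true]
          gcongr
          exact_mod_cast le_card_blockSet ht hN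
      _ = ∑ j ∈ blockSet σ t k, |x i| := by simp
      _ ≤ norm1 (block x σ t k) := by
          rw [norm1_block]
          exact sum_le_sum fun j hj => abs_le_of_mem_blockSet_succ hσ hi hj
  · simp [block, hi, norm1_nonneg]

end Blocks

theorem exists_sparse_blocks {N t : ℕ} (x : Fin N → ℝ) (ht : 0 < t) :
    ∃ y : ℕ → Fin N → ℝ, (∀ k, #{j | y k j ≠ 0} ≤ t) ∧ ∑ k ∈ range (N + 1), y k = x ∧
      ∑ k ∈ range N, norm2 (y (k + 1)) ≤ norm1 x / √t := by
  set σ := Tuple.sort fun j => -|x j|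
  have hσ : Antitone fun a => |x (σ a)| := fun a b hab => by
    simpa using Tuple.monotone_sort (fun j => -|x j|) hab
  refine ⟨block x σ t, card_support_block_le ht, sum_block, ?_⟩
  calc ∑ k ∈ range N, norm2 (block x σ t (k + 1))
      ≤ ∑ k ∈ range N, norm1 (block x σ t k) / √t :=
        sum_le_sum fun k _ => norm2_block_succ_le ht hσ k
    _ = norm1 x / √t := by rw [← sum_div, sum_norm1_block]

def SatisfiesDRIP1 {m n N : ℕ} (A : Matrix (Fin m) (Fin n) ℝ) (D : Matrix (Fin n) (Fin N) ℝ)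
    (t : ℕ) (δ : ℝ) : Prop :=
  ∀ x : Fin N → ℝ, #{j | x j ≠ 0} ≤ t →
    (1 - δ) * norm2 (D *ᵥ x) ≤ norm1 (A *ᵥ D *ᵥ x) ∧ norm1 (A *ᵥ D *ᵥ x) ≤ (1 + δ) * norm2 (D *ᵥ x)

theorem SatisfiesDRIP1.le_norm1_mulVec_sum {m n N t : ℕ} {A : Matrix (Fin m) (Fin n) ℝ}
    {D : Matrix (Fin n) (Fin N) ℝ} {δ : ℝ} (hA : SatisfiesDRIP1 A D t δ) (hδ : δ ≤ 1)
    {y : ℕ → Fin N → ℝ} (hy : ∀ k, #{j | y k j ≠ 0} ≤ t) (M : ℕ) :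
    (1 - δ) * norm2 (D *ᵥ ∑ k ∈ range (M + 1), y k) - 2 * ∑ k ∈ range M, norm2 (D *ᵥ y (k + 1))
      ≤ norm1 (A *ᵥ D *ᵥ ∑ k ∈ range (M + 1), y k) := by
  have hsplit : D *ᵥ ∑ k ∈ range (M + 1), y k = D *ᵥ y 0 + ∑ k ∈ range M, D *ᵥ y (k + 1) := by
    rw [sum_range_succ', mulVec_add, mulVec_sum, add_comm]
  have hD : norm2 (D *ᵥ ∑ k ∈ range (M + 1), y k)
      ≤ norm2 (D *ᵥ y 0) + ∑ k ∈ range M, norm2 (D *ᵥ y (k + 1)) := by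
    rw [hsplit]
    exact (norm2_add_le _ _).trans (add_le_add le_rfl (norm2_sum_le _ _))
  have hAD : norm1 (A *ᵥ D *ᵥ y 0)
      ≤ norm1 (A *ᵥ D *ᵥ ∑ k ∈ range (M + 1), y k)
        + ∑ k ∈ range M, norm1 (A *ᵥ D *ᵥ y (k + 1)) := by
    have : A *ᵥ D *ᵥ y 0
        = A *ᵥ D *ᵥ ∑ k ∈ range (M + 1), y k - ∑ k ∈ range M, A *ᵥ D *ᵥ y (k + 1) := by
      rw [hsplit, mulVec_add, mulVec_sum, add_sub_cancel_right]
    rw [this]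
    exact (norm1_sub_le _ _).trans (add_le_add le_rfl (norm1_sum_le _ _))
  have hhead := (hA (y 0) (hy 0)).1
  have htail : ∑ k ∈ range M, norm1 (A *ᵥ D *ᵥ y (k + 1))
      ≤ (1 + δ) * ∑ k ∈ range M, norm2 (D *ᵥ y (k + 1)) := by
    rw [mul_sum]
    exact sum_le_sum fun k _ => (hA _ (hy _)).2
  linarith [mul_le_mul_of_nonneg_left hD (sub_nonneg.2 hδ)]

/-- If A satisfies the D-RIP₁ of order t = 25s with constant δ = 1/5, then for every effectively
s-analysis-sparse f, ‖Af‖₁ ≥ (2/(5√s))‖D*f‖₁. -/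
theorem stmt4 (m n N s : ℕ)
    (D : Matrix (Fin n) (Fin N) ℝ) (hD : D * D.transpose = 1)
    (A : Matrix (Fin m) (Fin n) ℝ)
    (hRIP : ∀ x : Fin N → ℝ, (Finset.univ.filter fun j => x j ≠ 0).card ≤ 25 * s →
      (1 - 1/5) * norm2 (D.mulVec x) ≤ norm1 (A.mulVec (D.mulVec x)) ∧
      norm1 (A.mulVec (D.mulVec x)) ≤ (1 + 1/5) * norm2 (D.mulVec x))
    (f : Fin n → ℝ)
    (heff : norm1 (D.transpose.mulVec f) ≤ Real.sqrt s * norm2 (D.transpose.mulVec f)) :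
    2 / (5 * Real.sqrt s) * norm1 (D.transpose.mulVec f) ≤ norm1 (A.mulVec f) := by
  rcases Nat.eq_zero_or_pos s with rfl | hs
  · simpa using norm1_nonneg _
  set x := Dᵀ *ᵥ f
  have hf : D *ᵥ x = f := by rw [mulVec_mulVec, hD, one_mulVec]
  obtain ⟨y, hy_sparse, hy_sum, hy_tail⟩ := exists_sparse_blocks x (t := 25 * s) (by positivity)
  have hlow := SatisfiesDRIP1.le_norm1_mulVec_sum hRIP (by norm_num) hy_sparse N
  rw [hy_sum, hf, ← norm2_transpose_mulVec hD] at hlow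
  have hsqrt : √(25 * s : ℕ) = 5 * √s := by
    push_cast
    rw [Real.sqrt_mul (by norm_num), show (25 : ℝ) = 5 ^ 2 by norm_num, Real.sqrt_sq (by norm_num)]
  have htail : ∑ k ∈ range N, norm2 (D *ᵥ y (k + 1)) ≤ norm1 x / (5 * √s) :=
    (sum_le_sum fun k _ => norm2_mulVec_le hD _).trans (hy_tail.trans_eq (by rw [hsqrt]))
  have hs' : 0 < √(s : ℝ) := Real.sqrt_pos.2 (by exact_mod_cast hs)
  have heff' : norm1 x / √s ≤ norm2 x := (div_le_iff₀ hs').2 (by linarith)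
  have hcoeff : 2 / (5 * √s) * norm1 x = 4 / 5 * (norm1 x / √s) - 2 * (norm1 x / (5 * √s)) := by
    field_simp
    ring
  linarith
end

section
/- Let D ∈ ℝ^{n×N} be a tight frame. Suppose f¹, f² ∈ S^{n−1} satisfy ‖D*fⁱ‖₁ ≤ √s (for i = 1, 2), and ‖f¹ − f²‖₂ > ρ. Let T_i denote an index set of the t largest absolute entries of D*fⁱ, with t ≥ 4s/ρ². Then ‖(D*f¹)_{T₁} − (D*f²)_{T₂}‖₂ > ρ/2. -/
def restr {ι : Type*} [DecidableEq ι] (x : ι → ℝ) (T : Finset ι) : ι → ℝ :=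
  fun i => if i ∈ T then x i else 0

lemma norm2_eq_enorm {ι : Type*} [Fintype ι] (x : ι → ℝ) :
    norm2 x = ‖(WithLp.equiv 2 (ι → ℝ)).symm x‖ := by
  rw [EuclideanSpace.norm_eq]
  simp [norm2, sq_abs]

lemma norm2_triangle {ι : Type*} [Fintype ι] (x y : ι → ℝ) :
    norm2 (fun i => x i + y i) ≤ norm2 x + norm2 y := by
  have h : (fun i => x i + y i) = x + y := rfl
  rw [h, norm2_eq_enorm, norm2_eq_enorm, norm2_eq_enorm]
  rw [show (WithLp.equiv 2 (ι → ℝ)).symm (x + y)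
      = (WithLp.equiv 2 (ι → ℝ)).symm x + (WithLp.equiv 2 (ι → ℝ)).symm y from rfl]
  exact norm_add_le _ _

lemma tail_bound {ι : Type*} [Fintype ι] [DecidableEq ι] (x : ι → ℝ) (T : Finset ι)
    (t : ℕ) (ht : 0 < t) (hcard : T.card = t)
    (hT : ∀ i ∈ T, ∀ j ∉ T, |x j| ≤ |x i|) :
    ∑ j, (if j ∈ T then 0 else x j) ^ 2 ≤ (∑ j, |x j|) ^ 2 / (4 * t) := by
  have hne : T.Nonempty := Finset.card_pos.mp (hcard ▸ ht)
  obtain ⟨i₀, hi₀, hmin⟩ := T.exists_min_image (fun i => |x i|) hne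
  set m := |x i₀| with hm
  have hm0 : 0 ≤ m := abs_nonneg _
  set α := ∑ j, |x j| with hα
  set β := ∑ j, (if j ∈ T then 0 else |x j|) with hβ
  have hsumT : (t : ℝ) * m ≤ ∑ j ∈ T, |x j| := by
    calc (t : ℝ) * m = ∑ _j ∈ T, m := by rw [Finset.sum_const, hcard]; ring
    _ ≤ ∑ j ∈ T, |x j| := Finset.sum_le_sum fun j hj => hmin j hj
  have e1 : ∑ j, (if j ∈ T then |x j| else 0) = ∑ j ∈ T, |x j| := by
    rw [Finset.sum_ite_mem, Finset.univ_inter]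
  have hαsplit : α = ∑ j ∈ T, |x j| + β := by
    rw [hα, hβ, ← e1, ← Finset.sum_add_distrib]
    apply Finset.sum_congr rfl
    intro j _
    by_cases hj : j ∈ T <;> simp [hj]
  have hβ0 : 0 ≤ β := Finset.sum_nonneg fun j _ => by positivity
  have hβle : β ≤ α - t * m := by linarith
  have hmain : ∑ j, (if j ∈ T then 0 else x j) ^ 2 ≤ m * β := by
    rw [hβ, Finset.mul_sum]
    apply Finset.sum_le_sum
    intro j _
    by_cases hj : j ∈ T
    · simp [hj]
    · simp only [hj, if_neg, if_false]
      have h1 : |x j| ≤ m := hT i₀ hi₀ j hj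
      nlinarith [abs_nonneg (x j), sq_abs (x j)]
  have ht' : (0:ℝ) < t := by exact_mod_cast ht
  have : m * β ≤ α ^ 2 / (4 * t) := by
    rw [le_div_iff₀ (by positivity)]
    nlinarith [sq_nonneg (α - 2 * t * m), mul_le_mul_of_nonneg_left hβle hm0]
  linarith

/-- Separated points on the effectively sparse sphere stay separated after
restriction to the t largest analysis coefficients. -/
theorem stmt14 (n N t : ℕ) (s ρ : ℝ) (hs : 0 ≤ s) (hρ : 0 < ρ) (hts : 4 * s / ρ ^ 2 ≤ t)
    (D : Matrix (Fin n) (Fin N) ℝ) (hD : D * D.transpose = 1)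
    (f₁ f₂ : Fin n → ℝ) (hf₁ : norm2 f₁ = 1) (hf₂ : norm2 f₂ = 1)
    (h₁ : norm1 (D.transpose.mulVec f₁) ≤ Real.sqrt s)
    (h₂ : norm1 (D.transpose.mulVec f₂) ≤ Real.sqrt s)
    (hsep : ρ < norm2 (fun i => f₁ i - f₂ i))
    (T₁ T₂ : Finset (Fin N)) (hT₁card : T₁.card = t) (hT₂card : T₂.card = t)
    (hT₁ : ∀ i ∈ T₁, ∀ j ∉ T₁, |D.transpose.mulVec f₁ j| ≤ |D.transpose.mulVec f₁ i|)
    (hT₂ : ∀ i ∈ T₂, ∀ j ∉ T₂, |D.transpose.mulVec f₂ j| ≤ |D.transpose.mulVec f₂ i|) :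
    ρ / 2 < norm2 (fun j =>
      restr (D.transpose.mulVec f₁) T₁ j - restr (D.transpose.mulVec f₂) T₂ j) := by
  set x₁ := D.transpose.mulVec f₁ with hx₁
  set x₂ := D.transpose.mulVec f₂ with hx₂
  -- tight frame norm preservation
  have hnorm : ∀ g : Fin n → ℝ, ∑ j, (D.transpose.mulVec g) j ^ 2 = ∑ i, g i ^ 2 := by
    intro g
    have h1 : ∑ j, (D.transpose.mulVec g) j ^ 2
        = dotProduct (D.transpose.mulVec g) (D.transpose.mulVec g) := by
      simp [dotProduct, sq]
    rw [h1, Matrix.dotProduct_mulVec, Matrix.vecMul_transpose, Matrix.mulVec_mulVec, hD,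
      Matrix.one_mulVec]
    simp [dotProduct, sq, mul_comm]
  have hdiff : norm2 (fun j => x₁ j - x₂ j) = norm2 (fun i => f₁ i - f₂ i) := by
    have h2 : ∀ j, x₁ j - x₂ j = D.transpose.mulVec (f₁ - f₂) j := by
      intro j; rw [Matrix.mulVec_sub]; rfl
    simp only [norm2, h2]
    rw [hnorm (f₁ - f₂)]
    simp [Pi.sub_apply]
  rcases Nat.eq_zero_or_pos t with ht0 | ht
  · -- degenerate case: t = 0 forces s = 0 hence x₁ = x₂ = 0, contradiction
    exfalso
    have hs0 : s = 0 := by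
      by_contra h
      have hspos : 0 < s := lt_of_le_of_ne hs (Ne.symm h)
      have hp : (0:ℝ) < 4 * s / ρ ^ 2 := div_pos (by linarith) (pow_pos hρ 2)
      rw [ht0] at hts
      push_cast at hts
      linarith
    rw [hs0, Real.sqrt_zero] at h₁ h₂
    have hx₁0 : ∀ j, x₁ j = 0 := by
      intro j
      have h3 : ∀ k, k ∈ Finset.univ → (0:ℝ) ≤ |x₁ k| := fun k _ => abs_nonneg _
      have := Finset.single_le_sum h3 (Finset.mem_univ j)
      have h4 : |x₁ j| ≤ 0 := le_trans this h₁
      exact abs_nonpos_iff.mp h4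
    have hx₂0 : ∀ j, x₂ j = 0 := by
      intro j
      have h3 : ∀ k, k ∈ Finset.univ → (0:ℝ) ≤ |x₂ k| := fun k _ => abs_nonneg _
      have := Finset.single_le_sum h3 (Finset.mem_univ j)
      have h4 : |x₂ j| ≤ 0 := le_trans this h₂
      exact abs_nonpos_iff.mp h4
    have : norm2 (fun j => x₁ j - x₂ j) = 0 := by
      simp [norm2, hx₁0, hx₂0]
    rw [hdiff] at this
    linarith
  · -- main case
    have ht' : (0:ℝ) < t := by exact_mod_cast ht
    have hts' : 4 * s ≤ ρ ^ 2 * t := by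
      rw [div_le_iff₀ (by positivity)] at hts
      linarith
    -- tail bounds
    have key : ∀ (x : Fin N → ℝ) (T : Finset (Fin N)), T.card = t →
        (∀ i ∈ T, ∀ j ∉ T, |x j| ≤ |x i|) → norm1 x ≤ Real.sqrt s →
        norm2 (fun j => if j ∈ T then 0 else x j) ≤ ρ / 4 := by
      intro x T hc hTx hn1
      have h1 := tail_bound x T t ht hc hTx
      have hα0 : 0 ≤ ∑ j, |x j| := Finset.sum_nonneg fun j _ => abs_nonneg _
      have hα2 : (∑ j, |x j|) ^ 2 ≤ s := by
        have hss := Real.sq_sqrt hs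
        have hn1' : ∑ j, |x j| ≤ Real.sqrt s := hn1
        nlinarith [mul_le_mul hn1' hn1' hα0 (Real.sqrt_nonneg s)]
      have h2 : (∑ j, |x j|) ^ 2 / (4 * t) ≤ (ρ / 4) ^ 2 := by
        rw [div_le_iff₀ (by positivity)]
        nlinarith
      have h3 : ∑ j, (if j ∈ T then 0 else x j) ^ 2 ≤ (ρ / 4) ^ 2 := by linarith
      calc norm2 (fun j => if j ∈ T then 0 else x j)
          ≤ Real.sqrt ((ρ / 4) ^ 2) := Real.sqrt_le_sqrt h3
        _ = ρ / 4 := Real.sqrt_sq (by positivity)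
    have hu₁ := key x₁ T₁ hT₁card hT₁ h₁
    have hu₂ := key x₂ T₂ hT₂card hT₂ h₂
    set u₁ : Fin N → ℝ := fun j => if j ∈ T₁ then 0 else x₁ j with hu₁def
    set u₂ : Fin N → ℝ := fun j => if j ∈ T₂ then 0 else x₂ j with hu₂def
    set y : Fin N → ℝ := fun j => restr x₁ T₁ j - restr x₂ T₂ j with hy
    have hdecomp : (fun j => x₁ j - x₂ j)
        = fun j => (y j + u₁ j) + (-u₂ j) := by
      funext j
      simp only [hy, hu₁def, hu₂def, restr]
      by_cases h1 : j ∈ T₁ <;> by_cases h2 : j ∈ T₂ <;> simp [h1, h2] <;> ring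
    have htri : norm2 (fun j => x₁ j - x₂ j)
        ≤ norm2 y + norm2 u₁ + norm2 (fun j => -u₂ j) := by
      rw [hdecomp]
      calc norm2 (fun j => (y j + u₁ j) + (-u₂ j))
          ≤ norm2 (fun j => y j + u₁ j) + norm2 (fun j => -u₂ j) :=
            norm2_triangle _ _
        _ ≤ (norm2 y + norm2 u₁) + norm2 (fun j => -u₂ j) := by
            have := norm2_triangle y u₁
            linarith
        _ = norm2 y + norm2 u₁ + norm2 (fun j => -u₂ j) := by ring
    have hneg : norm2 (fun j => -u₂ j) = norm2 u₂ := by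
      simp [norm2, neg_sq]
    rw [hneg] at htri
    rw [hdiff] at htri
    linarith
end
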